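/- Let α, β : ℕ → ℚ⟦q⟧ be sequences of formal power series forming a Bailey pair relative to a = 1, i.e. for every n ≥ 0, β_n = ∑_{r=0}^{n} α_r · ((q;q)_{n+r} · (q;q)_{n−r})^{-1}, where (q;q)_m = ∏_{j=1}^{m}(1−q^j) is a unit of ℚ⟦q⟧. Then in ℚ⟦q⟧: ∑_{n≥1} (q;q)_{n−1}² · β_n · q^n = α_0 · ∑_{n≥1} n·q^n·(1−q^n)^{-1} + ∑_{n≥1} α_n · q^n · (1−q^n)^{-2}, where all infinite sums converge coefficient-wise because the n-th summand is divisible by q^n. -/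

import Mathlib

open Finset
open scoped Classical

/-- The smallest part of a partition of `n` (for `n ≥ 1` the parts are nonempty). -/
noncomputable def minPart {n : ℕ} (P : n.Partition) : ℕ := sInf {k | k ∈ P.parts}

/-- The largest part of a partition of `n`. -/
def maxPart {n : ℕ} (P : n.Partition) : ℕ := P.parts.sup

/-- The rank of a partition: largest part minus number of parts. -/
def rank {n : ℕ} (P : n.Partition) : ℤ := (maxPart P : ℤ) - (Multiset.card P.parts : ℤ)

/-- `N(m,n)`: the number of partitions of `n` with rank `m`. -/
noncomputable def Nrank (m : ℤ) (n : ℕ) : ℕ := Nat.card {P : n.Partition // rank P = m}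

/-- The second Atkin–Garvan moment `N₂(n) = ∑_{m ∈ ℤ} m² N(m,n)`
(ranks of partitions of `n` all lie in `[-n, n]`). -/
noncomputable def N2 (n : ℕ) : ℤ := ∑ m ∈ Finset.Icc (-(n : ℤ)) (n : ℤ), m ^ 2 * Nrank m n

/-- Number of appearances of the smallest part in a partition. -/
noncomputable def sptCount {n : ℕ} (P : n.Partition) : ℕ := Multiset.count (minPart P) P.parts

/-- Andrews' smallest parts function. -/
noncomputable def spt (n : ℕ) : ℕ := ∑ P : n.Partition, sptCount P

/-- The condition defining `spt_{2,3}`: every part is `<` twice the smallest part, or is a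
multiple of `3` that is at least thrice the smallest part. -/
def Allowed {n : ℕ} (P : n.Partition) : Prop :=
  ∀ part ∈ P.parts, part < 2 * minPart P ∨ (3 ∣ part ∧ 3 * minPart P ≤ part)

/-- `spt_{2,3}(n)`. -/
noncomputable def spt23 (n : ℕ) : ℕ :=
  ∑ P : n.Partition, if Allowed P then sptCount P else 0

/-- The number of partitions of `n`. -/
noncomputable def pFun (n : ℕ) : ℕ := Nat.card n.Partition

/-- The number of partitions of `n` into parts divisible by 3. -/
noncomputable def p3 (n : ℕ) : ℕ := Nat.card {P : n.Partition // ∀ part ∈ P.parts, 3 ∣ part}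

/-- Sum of divisors. -/
def sigma1 (n : ℕ) : ℕ := ∑ d ∈ n.divisors, d

/-- `R(k)`: number of `(x,y,u,v) ∈ ℤ⁴` with `x² + xy + y² + u² + uv + v² = k`. -/
noncomputable def R (k : ℕ) : ℕ :=
  Set.ncard {w : ℤ × ℤ × ℤ × ℤ |
    w.1 ^ 2 + w.1 * w.2.1 + w.2.1 ^ 2 + w.2.2.1 ^ 2 + w.2.2.1 * w.2.2.2 + w.2.2.2 ^ 2 = (k : ℤ)}

/-- `P₃(n) = ∑_{k=1}^n R(k) p₃(n-k)`. -/
noncomputable def P3 (n : ℕ) : ℕ := ∑ k ∈ Finset.Icc 1 n, R k * p3 (n - k)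

open PowerSeries in
/-- `∑_{n ≥ 1} f n`, well-defined coefficientwise when `q^n ∣ f n`: the `N`-th coefficient
only receives contributions from `f n` with `1 ≤ n ≤ N`. -/
noncomputable def seriesSum (f : ℕ → PowerSeries ℚ) : PowerSeries ℚ :=
  PowerSeries.mk fun N => ∑ n ∈ Finset.Icc 1 N, PowerSeries.coeff N (f n)

open PowerSeries in
/-- The infinite product `∏_{k ≥ 0} (1 - q^(b + s k))` (for `b, s ≥ 1`): its `N`-th
coefficient agrees with that of any truncation `∏_{k < M} (1 - q^(b+sk))` with `M > N`. -/
noncomputable def pochInf (b s : ℕ) : PowerSeries ℚ :=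
  PowerSeries.mk fun N =>
    PowerSeries.coeff N (∏ k ∈ Finset.range (N + 1), (1 - (X : PowerSeries ℚ) ^ (b + s * k)))

open PowerSeries in
/-- `(q;q)_m = ∏_{j=1}^m (1 - q^j)`. -/
noncomputable def qPoch (m : ℕ) : PowerSeries ℚ := ∏ j ∈ Finset.Icc 1 m, (1 - (X : PowerSeries ℚ) ^ j)

namespace BP
open PowerSeries

noncomputable abbrev PS := PowerSeries ℚ

noncomputable def g (n r : ℕ) : PS :=
  (qPoch (n-1))^2 * (qPoch (n+r) * qPoch (n-r))⁻¹ * (X : PS)^n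

noncomputable def lam (r : ℕ) : PS :=
  X * (1 - (X:PS)^r)^2 * ((1 - (X:PS)^(r+1))^2)⁻¹

noncomputable def H (r n : ℕ) : PS :=
  (X:PS)^n * ((1 - (X:PS)^(2*r+1)) * (qPoch (n-1))^2 *
    ((1 - (X:PS)^(r+1))^2 * (qPoch (n-r-1) * qPoch (n+r)))⁻¹)

noncomputable def h0 (n : ℕ) : PS :=
  (X:PS)^n * ((1 - (X:PS)) * (1 - (X:PS)^n))⁻¹

lemma cc_osxp (j : ℕ) (hj : j ≠ 0) : constantCoeff (1 - (X:PS)^j) = 1 := by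
  rw [map_sub, map_one, map_pow, constantCoeff_X, zero_pow hj, sub_zero]

lemma qPoch_zero : qPoch 0 = 1 := by simp [qPoch]

lemma cc_qPoch (m : ℕ) : constantCoeff (qPoch m) = 1 := by
  rw [qPoch, map_prod, Finset.prod_eq_one]
  intro j hj
  exact cc_osxp j (by simp [Finset.mem_Icc] at hj; omega)

lemma qPoch_succ (m : ℕ) : qPoch (m+1) = qPoch m * (1 - (X:PS)^(m+1)) := by
  rw [qPoch, qPoch, ← Finset.prod_Icc_succ_top (by omega : 1 ≤ m + 1)]

-- test: cc of a compound unit via simp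
example (a r : ℕ) : constantCoeff ((1 - (X:PS)^(r+1))^2 * (qPoch a * qPoch (a+2*r+1))) ≠ 0 := by
  simp [map_mul, map_pow, cc_qPoch, cc_osxp]

example (a r : ℕ) :
    (qPoch (a+2*r+1) * (1 - (X:PS)^(a+2*r+2)) * qPoch a) *
      (qPoch (a+2*r+1) * (1 - (X:PS)^(a+2*r+2)) * qPoch a)⁻¹ = 1 := by
  apply PowerSeries.mul_inv_cancel
  simp [map_mul, map_pow, cc_qPoch, cc_osxp]

end BP

namespace BP
open PowerSeries

lemma main_tele (r a : ℕ) :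
    g (a+r+1) (r+1) = lam r * g (a+r+1) r + (H r (a+r+1) - H r (a+r+2)) := by
  have i1 : a+r+1-1 = a+r := by omega
  have i2 : a+r+1+(r+1) = a+2*r+2 := by omega
  have i3 : a+r+1-(r+1) = a := by omega
  have i4 : a+r+1+r = a+2*r+1 := by omega
  have i5 : a+r+1-r = a+1 := by omega
  have i6 : a+r+1-r-1 = a := by omega
  have i7 : a+r+2-1 = a+r+1 := by omega
  have i8 : a+r+2-r-1 = a+1 := by omega
  have i9 : a+r+2+r = a+2*r+2 := by omega
  unfold g lam H
  rw [i1, i2, i3, i4, i6, i5, i8, i9, i7]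
  have e1 : qPoch (a+1) = qPoch a * (1-(X:PS)^(a+1)) := qPoch_succ a
  have e2 : qPoch (a+r+1) = qPoch (a+r) * (1-(X:PS)^(a+r+1)) := qPoch_succ (a+r)
  have e3 : qPoch (a+2*r+2) = qPoch (a+2*r+1) * (1-(X:PS)^(a+2*r+2)) := by
    have h := qPoch_succ (a+2*r+1)
    rwa [show a+2*r+1+1 = a+2*r+2 from by omega] at h
  rw [e1, e2, e3]
  have nz : ∀ φ : PS, constantCoeff φ ≠ 0 → φ ≠ 0 := fun φ h hh => h (by rw [hh, map_zero])
  have hc : ((1 - (X:PS)^(r+1))^2) * ((1 - (X:PS)^(r+1))^2)⁻¹ = 1 :=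
    PowerSeries.mul_inv_cancel _ (by simp [map_mul, map_pow, cc_qPoch, cc_osxp])
  have h1 : (qPoch (a+2*r+1) * (1 - (X:PS)^(a+2*r+2)) * qPoch a) *
      (qPoch (a+2*r+1) * (1 - (X:PS)^(a+2*r+2)) * qPoch a)⁻¹ = 1 :=
    PowerSeries.mul_inv_cancel _ (by simp [map_mul, map_pow, cc_qPoch, cc_osxp])
  have h2 : (qPoch (a+2*r+1) * (qPoch a * (1 - (X:PS)^(a+1)))) *
      (qPoch (a+2*r+1) * (qPoch a * (1 - (X:PS)^(a+1))))⁻¹ = 1 :=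
    PowerSeries.mul_inv_cancel _ (by simp [map_mul, map_pow, cc_qPoch, cc_osxp])
  have h3 : ((1 - (X:PS)^(r+1))^2 * (qPoch a * qPoch (a+2*r+1))) *
      ((1 - (X:PS)^(r+1))^2 * (qPoch a * qPoch (a+2*r+1)))⁻¹ = 1 :=
    PowerSeries.mul_inv_cancel _ (by simp [map_mul, map_pow, cc_qPoch, cc_osxp])
  have h4 : ((1 - (X:PS)^(r+1))^2 * (qPoch a * (1 - (X:PS)^(a+1)) *
        (qPoch (a+2*r+1) * (1 - (X:PS)^(a+2*r+2))))) *
      ((1 - (X:PS)^(r+1))^2 * (qPoch a * (1 - (X:PS)^(a+1)) *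
        (qPoch (a+2*r+1) * (1 - (X:PS)^(a+2*r+2)))))⁻¹ = 1 :=
    PowerSeries.mul_inv_cancel _ (by simp [map_mul, map_pow, cc_qPoch, cc_osxp])
  set x := (X : PS) with hxdef
  set Pa := qPoch a with hPa
  set Pr := qPoch (a+r) with hPr
  set Q := qPoch (a+2*r+1) with hQ
  set ta := 1 - x^(a+1) with hta
  set tr := 1 - x^(a+r+1) with htr
  set tq := 1 - x^(a+2*r+2) with htq
  set s := 1 - x^r with hs
  set m := 1 - x^(2*r+1) with hm
  set c := (1 - x^(r+1))^2 with hcdef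
  set U1 := Q * tq * Pa with hU1
  set U2 := Q * (Pa * ta) with hU2
  set U3 := c * (Pa * Q) with hU3
  set U4 := c * (Pa * ta * (Q * tq)) with hU4
  have hW : c * (U1 * U2 * U3 * U4) ≠ 0 := by
    apply nz
    rw [hU1, hU2, hU3, hU4, hcdef, hta, htq, hPa, hQ, hxdef]
    simp [map_mul, map_pow, cc_qPoch, cc_osxp]
  refine mul_right_cancel₀ hW ?_
  linear_combination (Pr^2 * x^(a+r+1) * c * (U2*U3*U4)) * h1
    - (x^(a+r+1+1) * s^2 * Pr^2 * (U1*U3*U4) * c * c⁻¹) * h2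
    - (x^(a+r+1+1) * s^2 * Pr^2 * (U1*U3*U4)) * hc
    - (x^(a+r+1) * m * Pr^2 * c * (U1*U2*U4)) * h3
    + (x^(a+r+1+1) * m * (Pr*tr)^2 * c * (U1*U2*U3)) * h4

end BP
namespace BP
open PowerSeries

lemma nz (φ : PS) (h : constantCoeff φ ≠ 0) : φ ≠ 0 := fun hh => h (by rw [hh, map_zero])

lemma qPoch_eq (r : ℕ) (hr : 1 ≤ r) : qPoch r = qPoch (r-1) * (1 - (X:PS)^r) := by
  obtain ⟨b, rfl⟩ : ∃ b, r = b + 1 := ⟨r-1, by omega⟩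
  simpa using qPoch_succ b

lemma base_tele (a : ℕ) : g (a+1) 1 = h0 (a+1) - h0 (a+2) := by
  have i1 : a+1-1 = a := by omega
  have i2 : a+1+1 = a+2 := by omega
  unfold g h0
  rw [i1, i2]
  have e2 : qPoch (a+2) = qPoch a * ((1-(X:PS)^(a+1)) * (1-(X:PS)^(a+2))) := by
    have h := qPoch_succ (a+1)
    rw [qPoch_succ a] at h
    rw [show a+1+1 = a+2 from by omega] at h
    rw [h]; ring
  rw [e2]
  have h1 : (qPoch a * ((1-(X:PS)^(a+1)) * (1-(X:PS)^(a+2))) * qPoch a) *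
      (qPoch a * ((1-(X:PS)^(a+1)) * (1-(X:PS)^(a+2))) * qPoch a)⁻¹ = 1 :=
    PowerSeries.mul_inv_cancel _ (by simp [map_mul, map_pow, cc_qPoch, cc_osxp])
  have h2 : ((1-(X:PS)) * (1-(X:PS)^(a+1))) * ((1-(X:PS)) * (1-(X:PS)^(a+1)))⁻¹ = 1 :=
    PowerSeries.mul_inv_cancel _ (by
      simp [map_mul, map_pow, cc_qPoch, cc_osxp, PowerSeries.constantCoeff_X])
  have h3 : ((1-(X:PS)) * (1-(X:PS)^(a+2))) * ((1-(X:PS)) * (1-(X:PS)^(a+2)))⁻¹ = 1 :=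
    PowerSeries.mul_inv_cancel _ (by
      simp [map_mul, map_pow, cc_qPoch, cc_osxp, PowerSeries.constantCoeff_X])
  have hW : (qPoch a * ((1-(X:PS)^(a+1)) * (1-(X:PS)^(a+2))) * qPoch a) *
      (((1-(X:PS)) * (1-(X:PS)^(a+1))) * ((1-(X:PS)) * (1-(X:PS)^(a+2)))) ≠ 0 := by
    apply nz
    simp [map_mul, map_pow, cc_qPoch, cc_osxp, PowerSeries.constantCoeff_X]
  refine mul_right_cancel₀ hW ?_
  linear_combination (qPoch a^2 * (X:PS)^(a+1) *
        (((1-(X:PS)) * (1-(X:PS)^(a+1))) * ((1-(X:PS)) * (1-(X:PS)^(a+2))))) * h1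
    - ((X:PS)^(a+1) * ((qPoch a * ((1-(X:PS)^(a+1)) * (1-(X:PS)^(a+2))) * qPoch a) *
        ((1-(X:PS)) * (1-(X:PS)^(a+2))))) * h2
    + ((X:PS)^(a+2) * ((qPoch a * ((1-(X:PS)^(a+1)) * (1-(X:PS)^(a+2))) * qPoch a) *
        ((1-(X:PS)) * (1-(X:PS)^(a+1))))) * h3

lemma bord (r : ℕ) (hr : 1 ≤ r) : H r (r+1) = lam r * g r r := by
  have i1 : r+1-1 = r := by omega
  have i2 : r+1-r-1 = 0 := by omega
  have i3 : r+1+r = 2*r+1 := by omega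
  have i4 : r+r = 2*r := by omega
  have i5 : r-r = 0 := by omega
  unfold H lam g
  rw [i2, i3, i1, i4, i5, qPoch_zero]
  have er : qPoch r = qPoch (r-1) * (1 - (X:PS)^r) := qPoch_eq r hr
  have e21 : qPoch (2*r+1) = qPoch (2*r) * (1-(X:PS)^(2*r+1)) := qPoch_succ (2*r)
  rw [er, e21]
  have h1 : ((1-(X:PS)^(r+1))^2 * (1 * (qPoch (2*r) * (1-(X:PS)^(2*r+1))))) *
      ((1-(X:PS)^(r+1))^2 * (1 * (qPoch (2*r) * (1-(X:PS)^(2*r+1)))))⁻¹ = 1 :=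
    PowerSeries.mul_inv_cancel _ (by simp [map_mul, map_pow, cc_qPoch, cc_osxp])
  have h2 : (qPoch (2*r) * 1) * (qPoch (2*r) * 1)⁻¹ = 1 :=
    PowerSeries.mul_inv_cancel _ (by simp [map_mul, map_pow, cc_qPoch, cc_osxp])
  have hc : ((1-(X:PS)^(r+1))^2) * ((1-(X:PS)^(r+1))^2)⁻¹ = 1 :=
    PowerSeries.mul_inv_cancel _ (by simp [map_mul, map_pow, cc_qPoch, cc_osxp])
  have hW : ((1-(X:PS)^(r+1))^2 * (1 * (qPoch (2*r) * (1-(X:PS)^(2*r+1))))) *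
      ((qPoch (2*r) * 1) * (1-(X:PS)^(r+1))^2) ≠ 0 := by
    apply nz
    simp [map_mul, map_pow, cc_qPoch, cc_osxp]
  refine mul_right_cancel₀ hW ?_
  linear_combination ((X:PS)^(r+1) * (1-(X:PS)^(2*r+1)) * (qPoch (r-1) * (1-(X:PS)^r))^2 *
      (qPoch (2*r) * 1) * (1-(X:PS)^(r+1))^2) * h1
    - ((X:PS)^(r+1) * (1-(X:PS)^r)^2 * qPoch (r-1)^2 *
        ((1-(X:PS)^(r+1))^2 * (1 * (qPoch (2*r) * (1-(X:PS)^(2*r+1))))) *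
        (1-(X:PS)^(r+1))^2 * ((1-(X:PS)^(r+1))^2)⁻¹) * h2
    - ((X:PS)^(r+1) * (1-(X:PS)^r)^2 * qPoch (r-1)^2 *
        ((1-(X:PS)^(r+1))^2 * (1 * (qPoch (2*r) * (1-(X:PS)^(2*r+1)))))) * hc

lemma lam_mul (r : ℕ) (hr : 1 ≤ r) :
    lam r * ((X:PS)^r * ((1 - (X:PS)^r)^2)⁻¹) = (X:PS)^(r+1) * ((1 - (X:PS)^(r+1))^2)⁻¹ := by
  unfold lam
  have hS : (1-(X:PS)^r)^2 * ((1-(X:PS)^r)^2)⁻¹ = 1 :=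
    PowerSeries.mul_inv_cancel _ (by
      rw [map_pow, cc_osxp r (by omega)]; norm_num)
  have hc : ((1-(X:PS)^(r+1))^2) * ((1-(X:PS)^(r+1))^2)⁻¹ = 1 :=
    PowerSeries.mul_inv_cancel _ (by simp [map_mul, map_pow, cc_qPoch, cc_osxp])
  have hW : (1-(X:PS)^r)^2 * (1-(X:PS)^(r+1))^2 ≠ 0 := by
    apply nz
    rw [map_mul, map_pow, map_pow, cc_osxp r (by omega), cc_osxp (r+1) (by omega)]
    norm_num
  refine mul_right_cancel₀ hW ?_
  linear_combination ((X:PS)^(r+1) * (1-(X:PS)^r)^2 * (1-(X:PS)^(r+1))^2 *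
      ((1-(X:PS)^(r+1))^2)⁻¹) * hS
    + ((X:PS)^(r+1) * (1-(X:PS)^r)^2) * hc
    - ((X:PS)^(r+1) * (1-(X:PS)^r)^2) * hc

lemma g0_eq (a : ℕ) : g (a+1) 0 = ((1 - (X:PS)^(a+1))^2)⁻¹ * (X:PS)^(a+1) := by
  have i1 : a+1-1 = a := by omega
  have i2 : a+1+0 = a+1 := by omega
  have i3 : a+1-0 = a+1 := by omega
  unfold g
  rw [i1, i2, i3, qPoch_succ a]
  have h1 : (qPoch a * (1-(X:PS)^(a+1)) * (qPoch a * (1-(X:PS)^(a+1)))) *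
      (qPoch a * (1-(X:PS)^(a+1)) * (qPoch a * (1-(X:PS)^(a+1))))⁻¹ = 1 :=
    PowerSeries.mul_inv_cancel _ (by simp [map_mul, map_pow, cc_qPoch, cc_osxp])
  have hV : (1-(X:PS)^(a+1))^2 * ((1-(X:PS)^(a+1))^2)⁻¹ = 1 :=
    PowerSeries.mul_inv_cancel _ (by simp [map_mul, map_pow, cc_qPoch, cc_osxp])
  have hW : (qPoch a * (1-(X:PS)^(a+1)) * (qPoch a * (1-(X:PS)^(a+1)))) *
      (1-(X:PS)^(a+1))^2 ≠ 0 := by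
    apply nz
    simp [map_mul, map_pow, cc_qPoch, cc_osxp]
  refine mul_right_cancel₀ hW ?_
  linear_combination (qPoch a^2 * (X:PS)^(a+1) * (1-(X:PS)^(a+1))^2) * h1
    - ((X:PS)^(a+1) * (qPoch a * (1-(X:PS)^(a+1)) * (qPoch a * (1-(X:PS)^(a+1))))) * hV

lemma sum_tele (f : ℕ → PS) (a : ℕ) :
    ∀ b, a ≤ b + 1 → ∑ n ∈ Finset.Icc a b, (f n - f (n+1)) = f a - f (b+1) := by
  intro b
  induction b with
  | zero =>
    intro h
    interval_cases a
    · simp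
    · simp
  | succ b ih =>
    intro h
    by_cases hab : a ≤ b + 1
    · rw [Finset.sum_Icc_succ_top hab, ih hab]; ring
    · have ha : a = b + 2 := by omega
      subst ha
      rw [Finset.Icc_eq_empty (by omega)]
      simp

lemma coeff_H_zero (r N k : ℕ) (hk : k ≤ N) : PowerSeries.coeff k (H r (N+1)) = 0 := by
  unfold H
  rw [PowerSeries.coeff_X_pow_mul', if_neg (by omega)]

lemma coeff_h0_zero (N k : ℕ) (hk : k ≤ N) : PowerSeries.coeff k (h0 (N+1)) = 0 := by
  unfold h0
  rw [PowerSeries.coeff_X_pow_mul', if_neg (by omega)]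

lemma coeff_mul_congr {A B c : PS} {k : ℕ}
    (h : ∀ j, j ≤ k → PowerSeries.coeff j A = PowerSeries.coeff j B) :
    PowerSeries.coeff k (c * A) = PowerSeries.coeff k (c * B) := by
  rw [PowerSeries.coeff_mul, PowerSeries.coeff_mul]
  apply Finset.sum_congr rfl
  intro p hp
  rw [h p.2 (by have := Finset.HasAntidiagonal.mem_antidiagonal.mp hp; omega)]

end BP
namespace BP
open PowerSeries

lemma h0_one : h0 1 = (X:PS)^1 * ((1 - (X:PS)^1)^2)⁻¹ := by
  unfold h0
  congr 1
  rw [pow_one, sq]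

lemma keyB (N : ℕ) : ∀ r, 1 ≤ r → ∀ k, k ≤ N →
    PowerSeries.coeff k (∑ n ∈ Finset.Icc r N, g n r) =
    PowerSeries.coeff k ((X:PS)^r * ((1 - (X:PS)^r)^2)⁻¹) := by
  intro r hr
  induction r, hr using Nat.le_induction with
  | base =>
    intro k hk
    have hterm : ∀ n ∈ Finset.Icc 1 N, g n 1 = h0 n - h0 (n+1) := by
      intro n hn
      simp only [Finset.mem_Icc] at hn
      obtain ⟨a, rfl⟩ : ∃ a, n = a + 1 := ⟨n-1, by omega⟩
      exact base_tele a
    rw [Finset.sum_congr rfl hterm, sum_tele h0 1 N (by omega), map_sub,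
      coeff_h0_zero N k hk, sub_zero, h0_one]
  | succ r hr ih =>
    intro k hk
    by_cases hrN : r ≤ N
    · have hsplit : ∑ n ∈ Finset.Icc r N, g n r = g r r + ∑ n ∈ Finset.Icc (r+1) N, g n r := by
        rw [show Finset.Icc r N = insert r (Finset.Icc (r+1) N) from by
          ext x; simp [Finset.mem_Icc, Finset.mem_insert]; omega]
        rw [Finset.sum_insert (by simp [Finset.mem_Icc])]
      have htele : ∑ n ∈ Finset.Icc (r+1) N, g n (r+1)
          = lam r * (∑ n ∈ Finset.Icc (r+1) N, g n r) + (H r (r+1) - H r (N+1)) := by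
        have hterm : ∀ n ∈ Finset.Icc (r+1) N, g n (r+1) = lam r * g n r + (H r n - H r (n+1)) := by
          intro n hn
          simp only [Finset.mem_Icc] at hn
          obtain ⟨a, rfl⟩ : ∃ a, n = a + r + 1 := ⟨n - r - 1, by omega⟩
          exact main_tele r a
        rw [Finset.sum_congr rfl hterm, Finset.sum_add_distrib, ← Finset.mul_sum,
          sum_tele (H r) (r+1) N (by omega)]
      have hG : ∑ n ∈ Finset.Icc (r+1) N, g n (r+1)
          = lam r * (∑ n ∈ Finset.Icc r N, g n r) - H r (N+1) := by
        rw [htele, hsplit, bord r hr]; ring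
      rw [hG, map_sub, coeff_H_zero r N k hk, sub_zero,
        coeff_mul_congr (fun j hj => ih j (hj.trans hk)), lam_mul r hr]
    · rw [Finset.Icc_eq_empty (by omega), Finset.sum_empty, map_zero,
        PowerSeries.coeff_X_pow_mul', if_neg (by omega)]

end BP

namespace BP
open PowerSeries

noncomputable def S1 (n : ℕ) : PS := PowerSeries.mk fun k => if n ∣ k then 1 else 0
noncomputable def S2 (n : ℕ) : PS :=
  PowerSeries.mk fun k => if n ∣ k then ((k/n + 1 : ℕ) : ℚ) else 0

lemma dvd_sub_iff {n k : ℕ} (h : n ≤ k) : n ∣ k ↔ n ∣ k - n := by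
  constructor
  · exact fun hd => Nat.dvd_sub hd dvd_rfl
  · intro hd
    have := Nat.dvd_add hd (dvd_refl n)
    rwa [Nat.sub_add_cancel h] at this

lemma S1_mul (n : ℕ) (hn : n ≠ 0) : S1 n * (1 - (X:PS)^n) = 1 := by
  ext k
  rw [mul_sub, mul_one, map_sub, PowerSeries.coeff_mul_X_pow', PowerSeries.coeff_one]
  simp only [S1, coeff_mk]
  by_cases h0 : k = 0
  · subst h0
    rw [if_pos (dvd_zero n), if_neg (by omega), if_pos rfl, sub_zero]
  · rw [if_neg h0]
    by_cases hle : n ≤ k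
    · rw [if_pos hle, if_congr (dvd_sub_iff hle) rfl rfl, sub_self]
    · rw [if_neg hle, if_neg, sub_zero]
      intro hd
      exact hle (Nat.le_of_dvd (Nat.pos_of_ne_zero h0) hd)

lemma S2_mul (n : ℕ) (hn : n ≠ 0) : S2 n * (1 - (X:PS)^n) = S1 n := by
  ext k
  rw [mul_sub, mul_one, map_sub, PowerSeries.coeff_mul_X_pow']
  simp only [S1, S2, coeff_mk]
  by_cases hle : n ≤ k
  · rw [if_pos hle, if_congr (dvd_sub_iff hle).symm rfl rfl]
    by_cases hd : n ∣ k
    · rw [if_pos hd, if_pos hd, if_pos hd]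
      obtain ⟨c, rfl⟩ := hd
      have hc : 1 ≤ c := by
        rcases Nat.eq_zero_or_pos c with h | h
        · subst h; simp at hle; omega
        · exact h
      obtain ⟨d, rfl⟩ : ∃ d, c = d + 1 := ⟨c-1, by omega⟩
      have h1 : n * (d+1) - n = n * d := by rw [Nat.mul_succ, Nat.add_sub_cancel]
      rw [h1, Nat.mul_div_cancel_left _ (Nat.pos_of_ne_zero hn),
        Nat.mul_div_cancel_left _ (Nat.pos_of_ne_zero hn)]
      push_cast; ring
    · rw [if_neg hd, if_neg hd, if_neg hd, sub_zero]
  · rw [if_neg hle, sub_zero]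
    by_cases h0 : k = 0
    · subst h0; simp
    · rw [if_neg, if_neg]
      · intro hd; exact hle (Nat.le_of_dvd (Nat.pos_of_ne_zero h0) hd)
      · intro hd; exact hle (Nat.le_of_dvd (Nat.pos_of_ne_zero h0) hd)

lemma geom_inv (n : ℕ) (hn : n ≠ 0) : (1 - (X:PS)^n)⁻¹ = S1 n :=
  PowerSeries.inv_eq_iff_mul_eq_one (by rw [cc_osxp n hn]; norm_num) |>.2 (S1_mul n hn)

lemma geom_sq_inv (n : ℕ) (hn : n ≠ 0) : ((1 - (X:PS)^n)^2)⁻¹ = S2 n := by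
  apply PowerSeries.inv_eq_iff_mul_eq_one (by rw [map_pow, cc_osxp n hn]; norm_num) |>.2
  calc S2 n * (1 - (X:PS)^n)^2
      = (S2 n * (1 - (X:PS)^n)) * (1 - (X:PS)^n) := by ring
    _ = S1 n * (1 - (X:PS)^n) := by rw [S2_mul n hn]
    _ = 1 := S1_mul n hn

lemma inv_sq_eq (u : PS) (hu : constantCoeff u ≠ 0) : (u⁻¹)^2 = (u^2)⁻¹ := by
  symm
  apply PowerSeries.inv_eq_iff_mul_eq_one (by rw [map_pow]; exact pow_ne_zero 2 hu) |>.2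
  have h := PowerSeries.inv_mul_cancel u hu
  calc u⁻¹^2 * u^2 = (u⁻¹ * u) * (u⁻¹ * u) := by ring
    _ = 1 := by rw [h, mul_one]

lemma filt_divisors (k : ℕ) :
    Finset.filter (fun n => n ∣ k) (Finset.Icc 1 k) = k.divisors := by
  ext x
  simp only [Finset.mem_filter, Finset.mem_Icc, Nat.mem_divisors]
  constructor
  · rintro ⟨⟨h1, h2⟩, h3⟩
    exact ⟨h3, by omega⟩
  · rintro ⟨h1, h2⟩
    refine ⟨⟨?_, Nat.le_of_dvd (Nat.pos_of_ne_zero h2) h1⟩, h1⟩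
    rcases Nat.eq_zero_or_pos x with h | h
    · subst h; simp at h1; omega
    · exact h

lemma keyA (N k : ℕ) (hk : k ≤ N) :
    PowerSeries.coeff k (∑ n ∈ Finset.Icc 1 N, g n 0) =
    PowerSeries.coeff k
      (seriesSum fun n => (n : PS) * (X:PS)^n * (1 - (X:PS)^n)⁻¹) := by
  -- LHS
  have hg : ∀ n ∈ Finset.Icc 1 N, g n 0 = ((1 - (X:PS)^n)^2)⁻¹ * (X:PS)^n := by
    intro n hn
    simp only [Finset.mem_Icc] at hn
    obtain ⟨a, rfl⟩ : ∃ a, n = a + 1 := ⟨n-1, by omega⟩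
    exact g0_eq a
  rw [Finset.sum_congr rfl hg, map_sum]
  have hterm : ∀ n ∈ Finset.Icc 1 N,
      PowerSeries.coeff k (((1 - (X:PS)^n)^2)⁻¹ * (X:PS)^n)
        = if n ≤ k ∧ n ∣ k then ((k/n : ℕ) : ℚ) else 0 := by
    intro n hn
    simp only [Finset.mem_Icc] at hn
    rw [geom_sq_inv n (by omega), PowerSeries.coeff_mul_X_pow']
    by_cases hle : n ≤ k
    · rw [if_pos hle]
      simp only [S2, coeff_mk]
      by_cases hd : n ∣ k
      · rw [if_pos ((dvd_sub_iff hle).mp hd), if_pos ⟨hle, hd⟩]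
        obtain ⟨c, rfl⟩ := hd
        have hc : 1 ≤ c := by
          rcases Nat.eq_zero_or_pos c with h | h
          · subst h; simp at hle; omega
          · exact h
        obtain ⟨d, rfl⟩ : ∃ d, c = d + 1 := ⟨c-1, by omega⟩
        have h1 : n * (d+1) - n = n * d := by rw [Nat.mul_succ, Nat.add_sub_cancel]
        rw [h1, Nat.mul_div_cancel_left _ (by omega : 0 < n),
          Nat.mul_div_cancel_left _ (by omega : 0 < n)]
      · rw [if_neg (fun hh => hd ((dvd_sub_iff hle).mpr hh)),
          if_neg (fun hh => hd hh.2)]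
    · rw [if_neg hle, if_neg (fun hh => hle hh.1)]
  rw [Finset.sum_congr rfl hterm]
  -- RHS
  rw [show PowerSeries.coeff k
      (seriesSum fun n => (n : PS) * (X:PS)^n * (1 - (X:PS)^n)⁻¹)
      = ∑ n ∈ Finset.Icc 1 k, PowerSeries.coeff k ((n : PS) * (X:PS)^n * (1 - (X:PS)^n)⁻¹)
    from by rw [seriesSum, coeff_mk]]
  have hterm2 : ∀ n ∈ Finset.Icc 1 k,
      PowerSeries.coeff k ((n : PS) * (X:PS)^n * (1 - (X:PS)^n)⁻¹)
        = if n ∣ k then (n : ℚ) else 0 := by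
    intro n hn
    simp only [Finset.mem_Icc] at hn
    have hcast : ((n : ℕ) : PS) = PowerSeries.C ((n : ℕ) : ℚ) := by
      rw [map_natCast]
    rw [mul_assoc, hcast, PowerSeries.coeff_C_mul, geom_inv n (by omega),
      PowerSeries.coeff_X_pow_mul', if_pos hn.2]
    simp only [S1, coeff_mk]
    rw [if_congr (dvd_sub_iff hn.2).symm rfl rfl, mul_ite, mul_one, mul_zero]
  rw [Finset.sum_congr rfl hterm2]
  -- both sides to divisor sums
  have hsub : ∑ n ∈ Finset.Icc 1 N, (if n ≤ k ∧ n ∣ k then ((k/n : ℕ) : ℚ) else 0)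
      = ∑ n ∈ Finset.Icc 1 k, (if n ∣ k then ((k/n : ℕ) : ℚ) else 0) := by
    rw [← Finset.sum_subset (Finset.Icc_subset_Icc_right hk)]
    · apply Finset.sum_congr rfl
      intro n hn
      simp only [Finset.mem_Icc] at hn
      rw [if_congr (and_iff_right hn.2) rfl rfl]
    · intro n hn hnot
      simp only [Finset.mem_Icc] at hn hnot
      rw [if_neg (fun hh => hnot ⟨by omega, hh.1⟩)]
  rw [hsub, ← Finset.sum_filter, ← Finset.sum_filter, filt_divisors]
  have := Nat.sum_div_divisors k (fun d => (d : ℕ))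
  calc ∑ d ∈ k.divisors, ((k/d : ℕ) : ℚ)
      = (((∑ d ∈ k.divisors, k/d : ℕ)) : ℚ) := by rw [Nat.cast_sum]
    _ = (((∑ d ∈ k.divisors, d : ℕ)) : ℚ) := by rw [this]
    _ = ∑ d ∈ k.divisors, ((d : ℕ) : ℚ) := by rw [Nat.cast_sum]

end BP

open PowerSeries in
/-- the doubly-differentiated Bailey lemma at `a = 1`, `z = y = 1`. -/
theorem bailey_pair_double_derivative (α β : ℕ → PowerSeries ℚ)
    (hpair : ∀ n : ℕ, β n = ∑ r ∈ Finset.range (n + 1), α r * (qPoch (n + r) * qPoch (n - r))⁻¹) :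
    seriesSum (fun n => (qPoch (n - 1)) ^ 2 * β n * (X : PowerSeries ℚ) ^ n) =
      α 0 * seriesSum (fun n =>
          (n : PowerSeries ℚ) * (X : PowerSeries ℚ) ^ n * (1 - (X : PowerSeries ℚ) ^ n)⁻¹) +
        seriesSum (fun n =>
          α n * (X : PowerSeries ℚ) ^ n * ((1 - (X : PowerSeries ℚ) ^ n)⁻¹) ^ 2) := by
  ext N
  rw [map_add]
  -- LHS: unfold and substitute the Bailey pair relation
  rw [show PowerSeries.coeff N (seriesSum fun n => (qPoch (n-1))^2 * β n * (X : PowerSeries ℚ)^n)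
      = ∑ n ∈ Finset.Icc 1 N, PowerSeries.coeff N ((qPoch (n-1))^2 * β n * (X : PowerSeries ℚ)^n)
    from by rw [seriesSum, PowerSeries.coeff_mk]]
  have hstep1 : ∀ n, (qPoch (n-1))^2 * β n * (X : PowerSeries ℚ)^n
      = ∑ r ∈ Finset.range (n+1), α r * BP.g n r := by
    intro n
    rw [hpair n, Finset.mul_sum, Finset.sum_mul]
    exact Finset.sum_congr rfl fun r _ => by unfold BP.g; ring
  simp only [hstep1, map_sum]
  -- swap the two sums
  have hswap : (∑ n ∈ Finset.Icc 1 N, ∑ r ∈ Finset.range (n+1),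
        PowerSeries.coeff N (α r * BP.g n r))
      = ∑ r ∈ Finset.range (N+1), ∑ n ∈ Finset.Icc 1 N,
          if r ≤ n then PowerSeries.coeff N (α r * BP.g n r) else 0 := by
    have hrect : ∀ n ∈ Finset.Icc 1 N,
        (∑ r ∈ Finset.range (n+1), PowerSeries.coeff N (α r * BP.g n r))
        = ∑ r ∈ Finset.range (N+1), if r ≤ n then PowerSeries.coeff N (α r * BP.g n r) else 0 := by
      intro n hn
      simp only [Finset.mem_Icc] at hn
      rw [← Finset.sum_filter]
      apply Finset.sum_congr
      · ext x
        simp only [Finset.mem_filter, Finset.mem_range]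
        omega
      · intros; rfl
    rw [Finset.sum_congr rfl hrect, Finset.sum_comm]
  rw [hswap]
  -- pull coefficients inside
  have hinner : ∀ r, (∑ n ∈ Finset.Icc 1 N, if r ≤ n then PowerSeries.coeff N (α r * BP.g n r) else 0)
      = PowerSeries.coeff N (α r * ∑ n ∈ Finset.filter (fun n => r ≤ n) (Finset.Icc 1 N), BP.g n r) := by
    intro r
    rw [Finset.mul_sum, map_sum, Finset.sum_filter]
  simp only [hinner]
  -- split off r = 0
  rw [Finset.sum_range_succ']
  have hf0 : Finset.filter (fun n => 0 ≤ n) (Finset.Icc 1 N) = Finset.Icc 1 N := by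
    apply Finset.filter_true_of_mem; intros; omega
  have hfi : ∀ i : ℕ, Finset.filter (fun n => i+1 ≤ n) (Finset.Icc 1 N) = Finset.Icc (i+1) N := by
    intro i; ext x; simp only [Finset.mem_filter, Finset.mem_Icc]; omega
  rw [hf0]
  rw [BP.coeff_mul_congr (fun j hj => BP.keyA N j (hj.trans (le_refl N)))]
  rw [add_comm]
  congr 1
  have hL : (∑ i ∈ Finset.range N, PowerSeries.coeff N
        (α (i+1) * ∑ n ∈ Finset.filter (fun n => i+1 ≤ n) (Finset.Icc 1 N), BP.g n (i+1)))
      = ∑ i ∈ Finset.range N, PowerSeries.coeff N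
        (α (i+1) * ((X : PowerSeries ℚ)^(i+1) * ((1 - (X : PowerSeries ℚ)^(i+1))^2)⁻¹)) := by
    apply Finset.sum_congr rfl
    intro i _
    rw [hfi i, BP.coeff_mul_congr (fun j hj => BP.keyB N (i+1) (by omega) j hj)]
  rw [hL]
  -- now the RHS seriesSum
  rw [show PowerSeries.coeff N (seriesSum fun n =>
        α n * (X : PowerSeries ℚ)^n * ((1 - (X : PowerSeries ℚ)^n)⁻¹)^2)
      = ∑ n ∈ Finset.Icc 1 N, PowerSeries.coeff N
          (α n * (X : PowerSeries ℚ)^n * ((1 - (X : PowerSeries ℚ)^n)⁻¹)^2)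
    from by rw [seriesSum, PowerSeries.coeff_mk]]
  rw [← Finset.Ico_add_one_right_eq_Icc, Finset.sum_Ico_eq_sum_range]
  norm_num
  apply Finset.sum_congr rfl
  intro i _
  have h1 : 1 + i = i + 1 := by omega
  rw [h1, BP.inv_sq_eq _ (by rw [BP.cc_osxp (i+1) (by omega)]; norm_num), mul_assoc]
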